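/- arXiv:1306.4821 — 2 statements merged into one kernel-verified Lean document; each statement's English description precedes it below -/
import Mathlib

section
/- Let (W,S) be a finite Coxeter system. Then every W-digraph is acyclic. Moreover, for a W-digraph Γ with finitely many vertices, the number of sources of Γ equals the number of connected components of Γ, and the number of sinks of Γ equals the number of connected components of Γ. -/
open Finsupp

set_option synthInstance.maxHeartbeats 1000000
set_option maxHeartbeats 1000000

noncomputable section

/-- The field `ℚ(u)` of rational functions. -/
abbrev Kq : Type := RatFunc ℚ

/-- The indeterminate `u`. -/
def uu : Kq := RatFunc.X

/-- An `S`-labeled digraph on vertex type `V` with labels in `B`: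
`Edge a b s d` means there is an edge from `a` to `b` labeled `s`, which is
dashed if `d = true` and solid if `d = false`.  There are no loops, and every
vertex occurs in exactly one edge with any given label. -/
structure SLabeledDigraph (V B : Type*) where
  Edge : V → V → B → Bool → Prop
  no_loop : ∀ v s d, ¬ Edge v v s d
  unique_edge : ∀ v s, ∃! e : V × V × Bool,
    (e.1 = v ∨ e.2.1 = v) ∧ Edge e.1 e.2.1 s e.2.2

namespace SLabeledDigraph

variable {V B : Type*} (Γ : SLabeledDigraph V B)

/-- Swap the endpoints of an edge datum. -/
def eswap {V : Type*} (e : V × V × Bool) : V × V × Bool := (e.2.1, e.1, e.2.2)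

/-- The reversed digraph `Γ_rev`, with all edge directions reversed but types
and labels kept. -/
def rev : SLabeledDigraph V B where
  Edge a b s d := Γ.Edge b a s d
  no_loop v s d := Γ.no_loop v s d
  unique_edge v s := by
    obtain ⟨e, ⟨hinc, hedge⟩, huniq⟩ := Γ.unique_edge v s
    refine ⟨eswap e, ⟨Or.symm hinc, hedge⟩, ?_⟩
    rintro e' ⟨hinc', hedge'⟩
    have h1 : eswap e' = e := huniq (eswap e') ⟨Or.symm hinc', hedge'⟩
    calc e' = eswap (eswap e') := rfl
    _ = eswap e := by rw [h1]

/-- The restriction `Γ_J`: same vertices, only edges with labels in `J`. -/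
def restrict (J : Set B) : SLabeledDigraph V J where
  Edge a b s d := Γ.Edge a b s.1 d
  no_loop v s d := Γ.no_loop v s.1 d
  unique_edge v s := Γ.unique_edge v s.1

/-- Directed adjacency (ignoring labels and edge types). -/
def DAdj (a b : V) : Prop := ∃ s d, Γ.Edge a b s d

/-- Undirected adjacency. -/
def UAdj (a b : V) : Prop := Γ.DAdj a b ∨ Γ.DAdj b a

/-- `Γ` is connected if any two vertices are joined by an undirected path. -/
def Connected : Prop := ∀ a b : V, Relation.ReflTransGen Γ.UAdj a b

/-- A source is a vertex at which no edge ends. -/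
def IsSource (a : V) : Prop := ∀ b s d, ¬ Γ.Edge b a s d

/-- A sink is a vertex at which no edge begins. -/
def IsSink (a : V) : Prop := ∀ b s d, ¬ Γ.Edge a b s d

/-- `Γ` is acyclic if it has no nonempty directed circuit. -/
def Acyclic : Prop := ∀ a : V, ¬ Relation.TransGen Γ.DAdj a a

/-- The setoid whose classes are the connected components of `Γ`. -/
def compSetoid : Setoid V :=
  ⟨Relation.ReflTransGen Γ.UAdj,
    ⟨fun _ => Relation.ReflTransGen.refl,
     fun h => (@Relation.ReflTransGen.stdSymm _ _ ⟨fun _ _ hab => Or.symm hab⟩).symm _ _ h,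
     fun h1 h2 => Relation.ReflTransGen.trans h1 h2⟩⟩

end SLabeledDigraph

/-- The Hecke algebra of a Coxeter system over `ℚ(u)`: an associative
`ℚ(u)`-algebra `H` with basis `{T_w : w ∈ W}` such that `T_1 = 1` and
`T_s T_w = T_{sw}` if `ℓ(sw) > ℓ(w)`, while
`T_s T_w = u² T_{sw} + (u² - 1) T_w` if `ℓ(sw) < ℓ(w)`. -/
structure HeckeAlgebra {B W : Type*} [Group W] {M : CoxeterMatrix B}
    (cs : CoxeterSystem M W) (H : Type*) [Ring H] [Algebra Kq H] where
  T : W → H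
  basis : Module.Basis W Kq H
  basis_eq : ∀ w, basis w = T w
  T_one : T 1 = 1
  T_mul_of_lt : ∀ (i : B) (w : W), cs.length w < cs.length (cs.simple i * w) →
    T (cs.simple i) * T w = T (cs.simple i * w)
  T_mul_of_gt : ∀ (i : B) (w : W), cs.length (cs.simple i * w) < cs.length w →
    T (cs.simple i) * T w = (uu ^ 2) • T (cs.simple i * w) + (uu ^ 2 - 1) • T w

variable {B W : Type*} [Group W] {M : CoxeterMatrix B}
variable {H : Type*} [Ring H] [Algebra Kq H]

/-- `ρ` is the representation of `H` on `M(Γ)` (the `ℚ(u)`-vector space with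
basis the vertices of `Γ`) in which each `T_s` acts by the operator `τ_s`
determined by the edges of `Γ`. -/
def WDigraphRep {V : Type*} (cs : CoxeterSystem M W) (ha : HeckeAlgebra cs H)
    (Γ : SLabeledDigraph V B)
    (ρ : H →ₐ[Kq] Module.End Kq (V →₀ Kq)) : Prop :=
  ∀ (a b : V) (i : B),
    (Γ.Edge a b i false →
      ρ (ha.T (cs.simple i)) (single a (1 : Kq)) = single b (1 : Kq) ∧
      ρ (ha.T (cs.simple i)) (single b (1 : Kq))
        = (uu ^ 2 - 1) • single b (1 : Kq) + (uu ^ 2) • single a (1 : Kq)) ∧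
    (Γ.Edge a b i true →
      ρ (ha.T (cs.simple i)) (single a (1 : Kq)) = uu • single a (1 : Kq) + (uu + 1) • single b (1 : Kq) ∧
      ρ (ha.T (cs.simple i)) (single b (1 : Kq))
        = (uu ^ 2 - uu - 1) • single b (1 : Kq) + (uu ^ 2 - uu) • single a (1 : Kq))

/-- `Γ` is a `W`-digraph: the assignment `T_s ↦ τ_s` extends to a
representation of `H` on `M(Γ)`. -/
def IsWDigraph {V : Type*} (cs : CoxeterSystem M W) (ha : HeckeAlgebra cs H)
    (Γ : SLabeledDigraph V B) : Prop :=
  ∃ ρ : H →ₐ[Kq] Module.End Kq (V →₀ Kq), WDigraphRep cs ha Γ ρ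

/-!
Two elements of the Hecke algebra of the finite group `W` carry the argument:
`E = ∑ T_w`, with `T_s E = E T_s = u² E`, and `E' = u^{2N} ∑ (-u²)^{-ℓ(w)} T_w` (`N` the maximal
length), with `T_s E' = -E'`. On the span of an `s`-edge, `τ_s` acts by a `2 × 2` matrix with
nonzero off-diagonal entries, so a common eigenvector of all `τ_s` vanishing at one end of an edge
vanishes at the other; hence two common eigenvectors for the same eigenvalue are proportional on
each connected component.

All matrix entries of `ρ(T_w)` are polynomials in `u`. At `u = 0` every `τ_s` sends the tail of its
edge to the head and the head to minus itself, so, at `u = 0`, the columns of `ρ(E)` at two sources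
(of `ρ(E')` at two sinks) restrict to the two sources (sinks) as nonzero multiples of distinct unit
vectors. They cannot be proportional, so a component contains at most one source and one sink; it
contains at least one of each because `Γ` is acyclic and finite.

For acyclicity, `E T_s = u² E` makes the row `β ↦ ρ(E)_{αβ}` get multiplied by `u²` along a solid
edge and by `(u² - u) / (u + 1)` along a dashed one, so its degree strictly increases along directed
paths; it is nonzero at `β = α`, being at `u = 2` a sum of nonnegative numbers one of which is `1`.
-/

lemma Relation.TransGen.lt_of_forall_lt {α β : Type*} [Preorder β] {r : α → α → Prop}
    {p : α → Prop} {g : α → β} (h : ∀ a b, r a b → p a → p b ∧ g a < g b) {a b : α}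
    (hab : Relation.TransGen r a b) (ha : p a) : p b ∧ g a < g b := by
  induction hab with
  | single hab => exact h _ _ hab ha
  | tail _ hbc ih =>
    obtain ⟨hc, hlt⟩ := h _ _ hbc ih.1
    exact ⟨hc, ih.2.trans hlt⟩

lemma Relation.exists_forall_not_reflTransGen {α : Type*} [Finite α] {r : α → α → Prop}
    (hr : ∀ a, ¬Relation.TransGen r a a) (a : α) :
    ∃ b, (∀ c, ¬r c b) ∧ Relation.ReflTransGen r b a := by
  have : IsTrans α (Relation.TransGen r) := ⟨fun _ _ _ => Relation.TransGen.trans⟩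
  have : Std.Irrefl (Relation.TransGen r) := ⟨hr⟩
  have hwf : WellFounded r :=
    Subrelation.wf Relation.TransGen.single (Finite.wellFounded_of_trans_of_irrefl _)
  obtain ⟨b, hb, hmin⟩ := hwf.has_min {b | Relation.ReflTransGen r b a} ⟨a, .refl⟩
  exact ⟨b, fun c hcb => hmin c (.head hcb hb) hcb, hb⟩

lemma Setoid.card_subtype_eq_card_quotient {α : Type*} (s : Setoid α) {P : α → Prop}
    (hex : ∀ a, ∃ b, P b ∧ s b a) (huniq : ∀ a b, P a → P b → s a b → a = b) :
    Nat.card {a // P a} = Nat.card (Quotient s) := by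
  refine Nat.card_eq_of_bijective (fun a => Quotient.mk s a.1) ⟨fun a b h => ?_, fun q => ?_⟩
  · exact Subtype.ext (huniq _ _ a.2 b.2 (Quotient.exact h))
  · induction q using Quotient.inductionOn with | h a => ?_
    obtain ⟨b, hb, hba⟩ := hex a
    exact ⟨⟨b, hb⟩, Quotient.sound hba⟩

open Polynomial

/-- The graph of evaluation at `u = c` on the polynomial subring `ℚ[u]` of `ℚ(u)`. -/
def HasValueAt (c : ℚ) (x : Kq) (q : ℚ) : Prop :=
  ∃ p : ℚ[X], algebraMap ℚ[X] Kq p = x ∧ p.eval c = q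

lemma hasValueAt_algebraMap (c : ℚ) (p : ℚ[X]) :
    HasValueAt c (algebraMap ℚ[X] Kq p) (p.eval c) :=
  ⟨p, rfl, rfl⟩

lemma hasValueAt_uu (c : ℚ) : HasValueAt c uu c :=
  ⟨X, RatFunc.algebraMap_X, eval_X⟩

lemma hasValueAt_ratCast (c q : ℚ) : HasValueAt c (q : Kq) q :=
  ⟨Polynomial.C q, by simp, eval_C⟩

namespace HasValueAt

variable {c q r : ℚ} {x y : Kq}

lemma add (hx : HasValueAt c x q) (hy : HasValueAt c y r) : HasValueAt c (x + y) (q + r) := by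
  obtain ⟨p, rfl, rfl⟩ := hx
  obtain ⟨p', rfl, rfl⟩ := hy
  exact ⟨p + p', map_add _ _ _, eval_add⟩

lemma mul (hx : HasValueAt c x q) (hy : HasValueAt c y r) : HasValueAt c (x * y) (q * r) := by
  obtain ⟨p, rfl, rfl⟩ := hx
  obtain ⟨p', rfl, rfl⟩ := hy
  exact ⟨p * p', map_mul _ _ _, eval_mul⟩

lemma sub (hx : HasValueAt c x q) (hy : HasValueAt c y r) : HasValueAt c (x - y) (q - r) := by
  obtain ⟨p, rfl, rfl⟩ := hx
  obtain ⟨p', rfl, rfl⟩ := hy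
  exact ⟨p - p', map_sub _ _ _, eval_sub _ _ _⟩

lemma pow (hx : HasValueAt c x q) (n : ℕ) : HasValueAt c (x ^ n) (q ^ n) := by
  obtain ⟨p, rfl, rfl⟩ := hx
  exact ⟨p ^ n, map_pow _ _ _, eval_pow _⟩

lemma sum {ι : Type*} (s : Finset ι) {f : ι → Kq} {g : ι → ℚ}
    (h : ∀ i ∈ s, HasValueAt c (f i) (g i)) : HasValueAt c (∑ i ∈ s, f i) (∑ i ∈ s, g i) := by
  classical
  induction s using Finset.induction_on with
  | empty => simpa using hasValueAt_ratCast c 0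
  | insert a s ha ih =>
    rw [Finset.sum_insert ha, Finset.sum_insert ha]
    exact (h a (s.mem_insert_self a)).add (ih fun i hi => h i (Finset.mem_insert_of_mem hi))

lemma unique (hq : HasValueAt c x q) (hr : HasValueAt c x r) : q = r := by
  obtain ⟨p, rfl, rfl⟩ := hq
  obtain ⟨p', hp, rfl⟩ := hr
  rw [(RatFunc.algebraMap_injective ℚ) hp]

lemma ne_zero (hx : HasValueAt c x q) (hq : q ≠ 0) : x ≠ 0 := by
  rintro rfl
  exact hq (hx.unique (by simpa using hasValueAt_ratCast c 0))

end HasValueAt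

lemma hasValueAt_single {V : Type*} (c : ℚ) (a γ : V) :
    HasValueAt c (single a (1 : Kq) γ) (single a 1 γ) := by
  classical
  rw [single_apply, single_apply]
  split_ifs
  · simpa using hasValueAt_ratCast c 1
  · simpa using hasValueAt_ratCast c 0

/-- The matrix of `τ_s` on the span of `a` and `b`, for an `s`-edge `a → b` that is dashed iff
`d`: its columns are the coordinates of `τ_s a` and `τ_s b`. -/
def edgeMatrix {R : Type*} [CommRing R] (u : R) (d : Bool) : Matrix (Fin 2) (Fin 2) R :=
  if d then !![u, u ^ 2 - u; u + 1, u ^ 2 - u - 1] else !![0, u ^ 2; 1, u ^ 2 - 1]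

lemma map_edgeMatrix {R S : Type*} [CommRing R] [CommRing S] (f : R →+* S) (u : R) (d : Bool)
    (i j : Fin 2) : f (edgeMatrix u d i j) = edgeMatrix (f u) d i j := by
  cases d <;> fin_cases i <;> fin_cases j <;> simp [edgeMatrix]

lemma edgeMatrix_zero {R : Type*} [CommRing R] (d : Bool) :
    edgeMatrix (0 : R) d = !![0, 0; 1, -1] := by
  cases d <;> ext i j <;> fin_cases i <;> fin_cases j <;> simp [edgeMatrix]

lemma hasValueAt_edgeMatrix (c : ℚ) (d : Bool) (i j : Fin 2) :
    HasValueAt c (edgeMatrix uu d i j) (edgeMatrix c d i j) := by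
  have h := hasValueAt_algebraMap c (edgeMatrix X d i j)
  rwa [map_edgeMatrix, ← coe_evalRingHom, map_edgeMatrix, RatFunc.algebraMap_X, coe_evalRingHom,
    eval_X] at h

lemma edgeMatrix_uu_offDiag_ne_zero (d : Bool) :
    edgeMatrix uu d 0 1 ≠ 0 ∧ edgeMatrix uu d 1 0 ≠ 0 := by
  constructor <;> refine (hasValueAt_edgeMatrix 2 d _ _).ne_zero ?_ <;>
    cases d <;> norm_num [edgeMatrix]

lemma uu_sq_sub_edgeMatrix_ne_zero (d : Bool) : uu ^ 2 - edgeMatrix uu d 0 0 ≠ 0 :=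
  (((hasValueAt_uu 2).pow 2).sub (hasValueAt_edgeMatrix 2 d 0 0)).ne_zero <| by
    cases d <;> norm_num [edgeMatrix]

/-- Any `u ≥ (1 + √5) / 2` would do here; at `u = 1` the entry `u ^ 2 - u - 1` is negative. -/
lemma edgeMatrix_two_nonneg (d : Bool) (i j : Fin 2) : 0 ≤ edgeMatrix (2 : ℚ) d i j := by
  cases d <;> fin_cases i <;> fin_cases j <;> norm_num [edgeMatrix]

lemma intDegree_edgeMatrix_lt (d : Bool) :
    (edgeMatrix uu d 1 0).intDegree < (uu ^ 2 - edgeMatrix uu d 0 0).intDegree := by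
  have hu : uu = algebraMap ℚ[X] Kq X := RatFunc.algebraMap_X.symm
  rw [hu, ← map_edgeMatrix, ← map_edgeMatrix, ← map_pow, ← map_sub, RatFunc.intDegree_polynomial,
    RatFunc.intDegree_polynomial]
  have h₁ : (X + 1 : ℚ[X]).natDegree = 1 := by compute_degree!
  have h₂ : (X ^ 2 - X : ℚ[X]).natDegree = 2 := by compute_degree!
  cases d <;> simp [edgeMatrix, h₁, h₂]

namespace CoxeterSystem

variable (cs : CoxeterSystem M W)

lemma sum_eq_zero_of_add_simple_mul [Fintype W] {R : Type*} [AddCommMonoid R] (i : B) {f : W → R}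
    (h : ∀ w, cs.length (cs.simple i * w) = cs.length w + 1 → f w + f (cs.simple i * w) = 0) :
    ∑ w, f w = 0 := by
  refine Finset.sum_ninvolution (cs.simple i * ·) (fun w => ?_)
    (fun w _ heq => cs.length_simple_mul_ne w i (congrArg cs.length heq))
    (fun _ => Finset.mem_univ _) (fun _ => cs.simple_mul_simple_cancel_left i)
  rcases cs.length_simple_mul w i with hw | hw
  · exact h w hw
  · have := h (cs.simple i * w) (by rw [cs.simple_mul_simple_cancel_left]; omega)
    rwa [cs.simple_mul_simple_cancel_left, add_comm] at this

lemma sum_eq_zero_of_add_mul_simple [Fintype W] {R : Type*} [AddCommMonoid R] (i : B) {f : W → R}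
    (h : ∀ w, cs.length (w * cs.simple i) = cs.length w + 1 → f w + f (w * cs.simple i) = 0) :
    ∑ w, f w = 0 := by
  refine Finset.sum_ninvolution (· * cs.simple i) (fun w => ?_)
    (fun w _ heq => cs.length_mul_simple_ne w i (congrArg cs.length heq))
    (fun _ => Finset.mem_univ _) (fun _ => cs.simple_mul_simple_cancel_right i)
  rcases cs.length_mul_simple w i with hw | hw
  · exact h w hw
  · have := h (w * cs.simple i) (by rw [cs.simple_mul_simple_cancel_right]; omega)
    rwa [cs.simple_mul_simple_cancel_right, add_comm] at this

/-- The coefficients of `u ^ (2 * N) * ∑ w, (-u ^ 2) ^ (-ℓ w) • T w`, polynomial in `u` as soon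
as `N` bounds the length function. -/
def signCoeff (N : ℕ) (w : W) : Kq := (-1) ^ cs.length w * uu ^ (2 * (N - cs.length w))

lemma signCoeff_mul_uu_sq {N : ℕ} {w w' : W} (h : cs.length w' = cs.length w + 1)
    (hN : cs.length w' ≤ N) : cs.signCoeff N w' * uu ^ 2 = -cs.signCoeff N w := by
  rw [signCoeff, signCoeff, h, mul_assoc, ← pow_add,
    show 2 * (N - (cs.length w + 1)) + 2 = 2 * (N - cs.length w) by omega]
  ring

lemma hasValueAt_signCoeff {N : ℕ} {w : W} (hw : cs.length w ≤ N) :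
    HasValueAt 0 (cs.signCoeff N w) (if cs.length w = N then (-1) ^ N else 0) := by
  have h := ((hasValueAt_ratCast 0 (-1)).pow (cs.length w)).mul ((hasValueAt_uu 0).pow
    (2 * (N - cs.length w)))
  push_cast at h
  rw [signCoeff]
  convert h using 1
  split_ifs with h'
  · simp [h']
  · simp [show N - cs.length w ≠ 0 by omega]

end CoxeterSystem

namespace HeckeAlgebra

variable {cs : CoxeterSystem M W} (ha : HeckeAlgebra cs H)

lemma T_wordProd {ω : List B} (hω : cs.IsReduced ω) :
    ha.T (cs.wordProd ω) = (ω.map fun i => ha.T (cs.simple i)).prod := by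
  induction ω with
  | nil => simp [ha.T_one]
  | cons i ω ih =>
    have hω' : cs.IsReduced ω := by simpa using hω.drop 1
    rw [cs.wordProd_cons, List.map_cons, List.prod_cons, ← ih hω', ha.T_mul_of_lt]
    rw [hω'.eq, ← cs.wordProd_cons, hω.eq, List.length_cons]
    omega

lemma T_mul_simple_of_lt {w : W} {i : B} (h : cs.length w < cs.length (w * cs.simple i)) :
    ha.T w * ha.T (cs.simple i) = ha.T (w * cs.simple i) := by
  obtain ⟨ω, hω, rfl⟩ := cs.exists_isReduced w
  have hωi : cs.IsReduced (ω ++ [i]) := by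
    rcases cs.length_mul_simple (cs.wordProd ω) i with h' | h' <;>
      simp_all [CoxeterSystem.IsReduced, cs.wordProd_append]
    omega
  rw [← cs.wordProd_singleton i, ← cs.wordProd_append, ha.T_wordProd hω, ha.T_wordProd hωi,
    ha.T_wordProd (by simp [CoxeterSystem.IsReduced, cs.length_simple])]
  simp

lemma T_simple_mul_self (i : B) :
    ha.T (cs.simple i) * ha.T (cs.simple i) = uu ^ 2 • 1 + (uu ^ 2 - 1) • ha.T (cs.simple i) := by
  have h := ha.T_mul_of_gt i (cs.simple i) (by simp [cs.simple_mul_simple_self, cs.length_simple])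
  rwa [cs.simple_mul_simple_self, ha.T_one] at h

lemma T_mul_simple_of_gt {w : W} {i : B} (h : cs.length (w * cs.simple i) < cs.length w) :
    ha.T w * ha.T (cs.simple i) = uu ^ 2 • ha.T (w * cs.simple i) + (uu ^ 2 - 1) • ha.T w := by
  have hw : ha.T (w * cs.simple i) * ha.T (cs.simple i) = ha.T w := by
    rw [ha.T_mul_simple_of_lt (by rwa [cs.simple_mul_simple_cancel_right]),
      cs.simple_mul_simple_cancel_right]
  rw [← hw, mul_assoc, T_simple_mul_self, mul_add, mul_smul_comm, mul_smul_comm, mul_one]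

lemma induction_on_apply_T {E : Type*} [AddCommGroup E] [Module Kq E]
    (ρ : H →ₐ[Kq] Module.End Kq E) {P : ℕ → E → Prop} {x : E} (h0 : P 0 x)
    (hstep : ∀ i n y, P n y → P (n + 1) (ρ (ha.T (cs.simple i)) y)) (w : W) :
    P (cs.length w) (ρ (ha.T w) x) := by
  obtain ⟨ω, hω, rfl⟩ := cs.exists_isReduced w
  rw [hω.eq, ha.T_wordProd hω]
  induction ω with
  | nil => simpa using h0
  | cons i ω ih =>
    simp only [List.map_cons, List.prod_cons, map_mul, Module.End.mul_apply, List.length_cons]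
    exact hstep i _ _ (ih (by simpa using hω.drop 1))

variable [Fintype W]

def sumT : H := ∑ w, ha.T w

def signSumT (N : ℕ) : H := ∑ w, cs.signCoeff N w • ha.T w

lemma T_simple_mul_sumT (i : B) : ha.T (cs.simple i) * ha.sumT = uu ^ 2 • ha.sumT := by
  rw [sumT, Finset.mul_sum, Finset.smul_sum, ← sub_eq_zero, ← Finset.sum_sub_distrib]
  refine cs.sum_eq_zero_of_add_simple_mul i fun w hw => ?_
  rw [ha.T_mul_of_lt i w (by omega),
    ha.T_mul_of_gt i _ (by rw [cs.simple_mul_simple_cancel_left]; omega),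
    cs.simple_mul_simple_cancel_left]
  simp only [sub_smul, one_smul]
  abel

lemma sumT_mul_T_simple (i : B) : ha.sumT * ha.T (cs.simple i) = uu ^ 2 • ha.sumT := by
  rw [sumT, Finset.sum_mul, Finset.smul_sum, ← sub_eq_zero, ← Finset.sum_sub_distrib]
  refine cs.sum_eq_zero_of_add_mul_simple i fun w hw => ?_
  rw [ha.T_mul_simple_of_lt (by omega),
    ha.T_mul_simple_of_gt (by rw [cs.simple_mul_simple_cancel_right]; omega),
    cs.simple_mul_simple_cancel_right]
  simp only [sub_smul, one_smul]
  abel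

lemma T_simple_mul_signSumT {N : ℕ} (hN : ∀ w, cs.length w ≤ N) (i : B) :
    ha.T (cs.simple i) * ha.signSumT N = (-1 : Kq) • ha.signSumT N := by
  rw [signSumT, Finset.mul_sum, Finset.smul_sum, ← sub_eq_zero, ← Finset.sum_sub_distrib]
  refine cs.sum_eq_zero_of_add_simple_mul i fun w hw => ?_
  rw [mul_smul_comm, mul_smul_comm, ha.T_mul_of_lt i w (by omega),
    ha.T_mul_of_gt i _ (by rw [cs.simple_mul_simple_cancel_left]; omega),
    cs.simple_mul_simple_cancel_left]
  simp only [smul_add, smul_sub, smul_smul, cs.signCoeff_mul_uu_sq hw (hN _), sub_smul, neg_smul,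
    neg_one_mul, one_smul]
  abel

variable {V : Type*} (ρ : H →ₐ[Kq] Module.End Kq (V →₀ Kq))

lemma sumT_apply_apply (x : V →₀ Kq) (ξ : V) : ρ ha.sumT x ξ = ∑ w, ρ (ha.T w) x ξ := by
  simp [sumT, Finsupp.finsetSum_apply]

lemma signSumT_apply_apply (N : ℕ) (x : V →₀ Kq) (ξ : V) :
    ρ (ha.signSumT N) x ξ = ∑ w, cs.signCoeff N w * ρ (ha.T w) x ξ := by
  simp [signSumT, Finsupp.finsetSum_apply]

end HeckeAlgebra

namespace SLabeledDigraph

variable {V : Type*} (Γ : SLabeledDigraph V B)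

lemma ne_of_edge {a b : V} {i : B} {d : Bool} (h : Γ.Edge a b i d) : a ≠ b :=
  fun hab => Γ.no_loop b i d (hab ▸ h)

lemma exists_edge (γ : V) (i : B) : (∃ b d, Γ.Edge γ b i d) ∨ ∃ a d, Γ.Edge a γ i d := by
  obtain ⟨⟨a, b, d⟩, ⟨rfl | rfl, hE⟩, -⟩ := Γ.unique_edge γ i
  exacts [.inl ⟨b, d, hE⟩, .inr ⟨a, d, hE⟩]

lemma edge_eq_of_mem {a b a' b' v : V} {i : B} {d d' : Bool} (hE : Γ.Edge a b i d)
    (hE' : Γ.Edge a' b' i d') (hv : v = a ∨ v = b) (hv' : v = a' ∨ v = b') :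
    a = a' ∧ b = b' := by
  obtain ⟨e, -, he⟩ := Γ.unique_edge v i
  have h := (he (a, b, d) ⟨hv.imp Eq.symm Eq.symm, hE⟩).trans
    (he (a', b', d') ⟨hv'.imp Eq.symm Eq.symm, hE'⟩).symm
  simp only [Prod.mk.injEq] at h
  exact ⟨h.1, h.2.1⟩

section CommRing

variable {K : Type*} [CommRing K]

def ActsBy (A : Bool → Matrix (Fin 2) (Fin 2) K) (τ : B → Module.End K (V →₀ K)) : Prop :=
  ∀ a b i d, Γ.Edge a b i d →
    τ i (single a 1) = A d 0 0 • single a 1 + A d 1 0 • single b 1 ∧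
    τ i (single b 1) = A d 0 1 • single a 1 + A d 1 1 • single b 1

namespace ActsBy

variable {Γ} {A : Bool → Matrix (Fin 2) (Fin 2) K} {τ : B → Module.End K (V →₀ K)}
  {a b : V} {i : B} {d : Bool}

lemma apply_single_apply_eq_zero (hτ : Γ.ActsBy A τ) (hE : Γ.Edge a b i d) {η ξ : V}
    (hη : η = a ∨ η = b) (hξa : ξ ≠ a) (hξb : ξ ≠ b) : τ i (single η 1) ξ = 0 := by
  rcases hη with rfl | rfl
  · simp [(hτ _ _ _ _ hE).1, hξa.symm, hξb.symm]
  · simp [(hτ _ _ _ _ hE).2, hξa.symm, hξb.symm]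

lemma apply_apply (hτ : Γ.ActsBy A τ) (hE : Γ.Edge a b i d) {ξ : V} (hξ : ξ = a ∨ ξ = b)
    (x : V →₀ K) : τ i x ξ = τ i (single a 1) ξ * x a + τ i (single b 1) ξ * x b := by
  have hab := Γ.ne_of_edge hE
  induction x using Finsupp.induction_linear with
  | zero => simp
  | add x y hx hy => simp only [map_add, Finsupp.add_apply, hx, hy]; ring
  | single η c =>
    rw [← mul_one c, ← smul_eq_mul, ← smul_single, map_smul, Finsupp.smul_apply, smul_eq_mul]
    by_cases hηa : η = a
    · simp [hηa, hab, mul_comm]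
    by_cases hηb : η = b
    · simp [hηb, hab.symm, mul_comm]
    obtain ⟨a', b', d', hE', hη⟩ : ∃ a' b' d', Γ.Edge a' b' i d' ∧ (η = a' ∨ η = b') := by
      rcases Γ.exists_edge η i with ⟨b', d', h⟩ | ⟨a', d', h⟩
      exacts [⟨η, b', d', h, .inl rfl⟩, ⟨a', η, d', h, .inr rfl⟩]
    have hoff : τ i (single η 1) ξ = 0 := by
      refine hτ.apply_single_apply_eq_zero hE' hη ?_ ?_ <;> rintro rfl
      · obtain ⟨rfl, rfl⟩ := Γ.edge_eq_of_mem hE hE' hξ (.inl rfl)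
        tauto
      · obtain ⟨rfl, rfl⟩ := Γ.edge_eq_of_mem hE hE' hξ (.inr rfl)
        tauto
    simp [hoff, Ne.symm hηa, Ne.symm hηb]

lemma apply_tail (hτ : Γ.ActsBy A τ) (hE : Γ.Edge a b i d) (x : V →₀ K) :
    τ i x a = A d 0 0 * x a + A d 0 1 * x b := by
  simp [hτ.apply_apply hE (.inl rfl), (hτ _ _ _ _ hE).1, (hτ _ _ _ _ hE).2, Γ.ne_of_edge hE]

lemma apply_head (hτ : Γ.ActsBy A τ) (hE : Γ.Edge a b i d) (x : V →₀ K) :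
    τ i x b = A d 1 0 * x a + A d 1 1 * x b := by
  simp [hτ.apply_apply hE (.inr rfl), (hτ _ _ _ _ hE).1, (hτ _ _ _ _ hE).2,
    (Γ.ne_of_edge hE).symm]

end ActsBy

end CommRing

namespace ActsBy

variable {Γ} {K : Type*} [Field K] {A : Bool → Matrix (Fin 2) (Fin 2) K}
  {τ : B → Module.End K (V →₀ K)} {μ : K} {v : V →₀ K} {a b : V} {i : B} {d : Bool}

lemma eq_zero_iff_of_edge (hτ : Γ.ActsBy A τ) (hA : ∀ d, A d 0 1 ≠ 0 ∧ A d 1 0 ≠ 0)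
    (hv : ∀ i, τ i v = μ • v) (hE : Γ.Edge a b i d) : v a = 0 ↔ v b = 0 := by
  have htail := hτ.apply_tail hE v
  have hhead := hτ.apply_head hE v
  rw [hv, Finsupp.smul_apply, smul_eq_mul] at htail hhead
  constructor <;> intro h <;> simp only [h, mul_zero, zero_add, add_zero] at htail hhead
  · exact (mul_eq_zero.mp htail.symm).resolve_left (hA d).1
  · exact (mul_eq_zero.mp hhead.symm).resolve_left (hA d).2

lemma eq_zero_of_reflTransGen (hτ : Γ.ActsBy A τ) (hA : ∀ d, A d 0 1 ≠ 0 ∧ A d 1 0 ≠ 0)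
    (hv : ∀ i, τ i v = μ • v) {β β' : V} (h : Relation.ReflTransGen Γ.UAdj β β')
    (hβ : v β = 0) : v β' = 0 := by
  induction h with
  | refl => exact hβ
  | tail _ hadj ih =>
    rcases hadj with ⟨i, d, hE⟩ | ⟨i, d, hE⟩
    exacts [(hτ.eq_zero_iff_of_edge hA hv hE).1 ih, (hτ.eq_zero_iff_of_edge hA hv hE).2 ih]

lemma mul_eq_mul_of_reflTransGen (hτ : Γ.ActsBy A τ) (hA : ∀ d, A d 0 1 ≠ 0 ∧ A d 1 0 ≠ 0)
    {v' : V →₀ K} (hv : ∀ i, τ i v = μ • v) (hv' : ∀ i, τ i v' = μ • v') {β β' : V}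
    (h : Relation.ReflTransGen Γ.UAdj β β') : v β * v' β' = v' β * v β' := by
  have hz : ∀ i, τ i (v β • v' - v' β • v) = μ • (v β • v' - v' β • v) := by
    intro i
    rw [map_sub, map_smul, map_smul, hv, hv', smul_sub, smul_comm μ, smul_comm μ]
  have := hτ.eq_zero_of_reflTransGen hA hz h (by simp [mul_comm])
  simpa [sub_eq_zero] using this

end ActsBy

section Finite

variable {Γ} [Finite V]

lemma Acyclic.exists_isSource (h : Γ.Acyclic) (a : V) :
    ∃ b, Γ.IsSource b ∧ Γ.compSetoid b a := by
  obtain ⟨b, hb, hba⟩ := Relation.exists_forall_not_reflTransGen h a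
  exact ⟨b, fun c i d hE => hb c ⟨i, d, hE⟩, Relation.ReflTransGen.mono (fun _ _ => Or.inl) _ _ hba⟩

lemma Acyclic.exists_isSink (h : Γ.Acyclic) (a : V) :
    ∃ b, Γ.IsSink b ∧ Γ.compSetoid b a := by
  obtain ⟨b, hb, hba⟩ := Relation.exists_forall_not_reflTransGen (r := flip Γ.DAdj)
    (fun a ha => h a (Relation.transGen_swap.mp ha)) a
  exact ⟨b, fun c i d hE => hb c ⟨i, d, hE⟩, Relation.ReflTransGen.mono (fun _ _ => Or.inr) _ _ hba⟩

end Finite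

end SLabeledDigraph

namespace SLabeledDigraph.ActsBy

variable {V : Type*} {Γ : SLabeledDigraph V B} {τ : B → Module.End Kq (V →₀ Kq)} {a b : V}
  {i : B} {d : Bool} {c p q : ℚ} {x : V →₀ Kq}

lemma hasValueAt_apply_tail (hτ : Γ.ActsBy (edgeMatrix uu) τ) (hE : Γ.Edge a b i d)
    (hp : HasValueAt c (x a) p) (hq : HasValueAt c (x b) q) :
    HasValueAt c (τ i x a) (edgeMatrix c d 0 0 * p + edgeMatrix c d 0 1 * q) := by
  rw [hτ.apply_tail hE]
  exact ((hasValueAt_edgeMatrix c d 0 0).mul hp).add ((hasValueAt_edgeMatrix c d 0 1).mul hq)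

lemma hasValueAt_apply_head (hτ : Γ.ActsBy (edgeMatrix uu) τ) (hE : Γ.Edge a b i d)
    (hp : HasValueAt c (x a) p) (hq : HasValueAt c (x b) q) :
    HasValueAt c (τ i x b) (edgeMatrix c d 1 0 * p + edgeMatrix c d 1 1 * q) := by
  rw [hτ.apply_head hE]
  exact ((hasValueAt_edgeMatrix c d 1 0).mul hp).add ((hasValueAt_edgeMatrix c d 1 1).mul hq)

end SLabeledDigraph.ActsBy

namespace WDigraphRep

variable {V : Type*} {cs : CoxeterSystem M W} {ha : HeckeAlgebra cs H}
  {Γ : SLabeledDigraph V B} {ρ : H →ₐ[Kq] Module.End Kq (V →₀ Kq)}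

lemma actsBy (hρ : WDigraphRep cs ha Γ ρ) :
    Γ.ActsBy (edgeMatrix uu) fun i => ρ (ha.T (cs.simple i)) := by
  intro a b i d hE
  cases d
  · simp [edgeMatrix, ((hρ a b i).1 hE).1, ((hρ a b i).1 hE).2, add_comm]
  · simp [edgeMatrix, ((hρ a b i).2 hE).1, ((hρ a b i).2 hE).2, add_comm]

lemma exists_nonneg_hasValueAt_two (hρ : WDigraphRep cs ha Γ ρ) (w : W) (a γ : V) :
    ∃ q, 0 ≤ q ∧ HasValueAt 2 (ρ (ha.T w) (single a 1) γ) q := by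
  classical
  refine ha.induction_on_apply_T ρ (P := fun _ x => ∀ γ, ∃ q, 0 ≤ q ∧ HasValueAt 2 (x γ) q)
    (fun γ => ⟨_, by rw [single_apply]; split_ifs <;> norm_num, hasValueAt_single 2 a γ⟩)
    (fun i _ y hy γ => ?_) w γ
  rcases Γ.exists_edge γ i with ⟨b, d, hE⟩ | ⟨a', d, hE⟩
  · obtain ⟨p, hp, hyp⟩ := hy γ
    obtain ⟨q, hq, hyq⟩ := hy b
    exact ⟨_, add_nonneg (mul_nonneg (edgeMatrix_two_nonneg d 0 0) hp)
      (mul_nonneg (edgeMatrix_two_nonneg d 0 1) hq),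
      hρ.actsBy.hasValueAt_apply_tail hE hyp hyq⟩
  · obtain ⟨p, hp, hyp⟩ := hy a'
    obtain ⟨q, hq, hyq⟩ := hy γ
    exact ⟨_, add_nonneg (mul_nonneg (edgeMatrix_two_nonneg d 1 0) hp)
      (mul_nonneg (edgeMatrix_two_nonneg d 1 1) hq),
      hρ.actsBy.hasValueAt_apply_head hE hyp hyq⟩

lemma hasValueAt_zero_apply_T_of_isSource (hρ : WDigraphRep cs ha Γ ρ) {w : W} (hw : w ≠ 1)
    (a : V) {ξ : V} (hξ : Γ.IsSource ξ) : HasValueAt 0 (ρ (ha.T w) (single a 1) ξ) 0 := by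
  have hinv := ha.induction_on_apply_T ρ
    (P := fun n x => ∀ γ, ∃ q, HasValueAt 0 (x γ) q ∧ (n ≠ 0 → Γ.IsSource γ → q = 0))
    (fun γ => ⟨_, hasValueAt_single 0 a γ, fun h => absurd rfl h⟩) (fun i _ y hy γ => ?_) w ξ
  · obtain ⟨q, hq, hq0⟩ := hinv
    obtain rfl := hq0 (by rwa [Ne, cs.length_eq_zero_iff]) hξ
    exact hq
  rcases Γ.exists_edge γ i with ⟨b, d, hE⟩ | ⟨a', d, hE⟩
  · obtain ⟨p, hyp, -⟩ := hy γ
    obtain ⟨q, hyq, -⟩ := hy b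
    exact ⟨_, hρ.actsBy.hasValueAt_apply_tail hE hyp hyq, fun _ _ => by simp [edgeMatrix_zero]⟩
  · obtain ⟨p, hyp, -⟩ := hy a'
    obtain ⟨q, hyq, -⟩ := hy γ
    exact ⟨_, hρ.actsBy.hasValueAt_apply_head hE hyp hyq, fun _ hγ => (hγ a' i d hE).elim⟩

lemma hasValueAt_zero_apply_T_of_isSink (hρ : WDigraphRep cs ha Γ ρ) {t : V} (ht : Γ.IsSink t)
    (w : W) (γ : V) :
    HasValueAt 0 (ρ (ha.T w) (single t 1) γ) (single t ((-1) ^ cs.length w) γ) := by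
  classical
  refine ha.induction_on_apply_T ρ
    (P := fun n x => ∀ γ, HasValueAt 0 (x γ) (single t ((-1) ^ n) γ))
    (fun γ => by simpa using hasValueAt_single 0 t γ) (fun i n y hy γ => ?_) w γ
  rcases Γ.exists_edge γ i with ⟨b, d, hE⟩ | ⟨a, d, hE⟩
  · have hγt : t ≠ γ := by rintro rfl; exact ht b i d hE
    convert hρ.actsBy.hasValueAt_apply_tail hE (hy γ) (hy b) using 1
    simp [edgeMatrix_zero, single_apply, hγt]
  · have hat : t ≠ a := by rintro rfl; exact ht γ i d hE
    convert hρ.actsBy.hasValueAt_apply_head hE (hy a) (hy γ) using 1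
    simp only [single_apply, if_neg hat]
    split_ifs <;> simp [edgeMatrix_zero, pow_succ]

lemma eq_of_reflTransGen (hρ : WDigraphRep cs ha Γ ρ) {e : H} {μ : Kq}
    (he : ∀ i, ha.T (cs.simple i) * e = μ • e) {P : V → Prop} {c m : ℚ} (hm : m ≠ 0)
    (hval : ∀ γ ξ, P γ → P ξ → HasValueAt c (ρ e (single γ 1) ξ) (single γ m ξ)) {γ δ : V}
    (hγ : P γ) (hδ : P δ) (h : Relation.ReflTransGen Γ.UAdj γ δ) : γ = δ := by
  by_contra hne
  have heigen : ∀ a i, ρ (ha.T (cs.simple i)) (ρ e (single a 1)) = μ • ρ e (single a 1) := by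
    intro a i
    rw [← Module.End.mul_apply, ← map_mul, he, map_smul, LinearMap.smul_apply]
  have hprop := hρ.actsBy.mul_eq_mul_of_reflTransGen edgeMatrix_uu_offDiag_ne_zero
    (heigen γ) (heigen δ) h
  have hdiag := (hval γ γ hγ hγ).mul (hval δ δ hδ hδ)
  have hoff := (hval δ γ hδ hγ).mul (hval γ δ hγ hδ)
  rw [hprop] at hdiag
  simp only [single_eq_same, single_eq_of_ne hne, single_eq_of_ne (Ne.symm hne), mul_zero]
    at hdiag hoff
  exact hm (mul_self_eq_zero.mp (hdiag.unique hoff))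

variable [Fintype W]

lemma hasValueAt_sumT_apply_of_isSource (hρ : WDigraphRep cs ha Γ ρ) (a : V) {ξ : V}
    (hξ : Γ.IsSource ξ) : HasValueAt 0 (ρ ha.sumT (single a 1) ξ) (single a 1 ξ) := by
  classical
  have h : ∀ w ∈ Finset.univ, HasValueAt 0 (ρ (ha.T w) (single a 1) ξ)
      (if w = 1 then single a 1 ξ else 0) := by
    intro w _
    split_ifs with hw
    · simpa [hw, ha.T_one] using hasValueAt_single 0 a ξ
    · exact hρ.hasValueAt_zero_apply_T_of_isSource hw a hξ
  simpa [ha.sumT_apply_apply] using HasValueAt.sum _ h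

lemma hasValueAt_signSumT_apply_of_isSink (hρ : WDigraphRep cs ha Γ ρ) {N : ℕ}
    (hN : ∀ w, cs.length w ≤ N) {t : V} (ht : Γ.IsSink t) (ξ : V) :
    HasValueAt 0 (ρ (ha.signSumT N) (single t 1) ξ)
      (single t ((Finset.univ.filter (cs.length · = N)).card : ℚ) ξ) := by
  classical
  have h : ∀ w ∈ Finset.univ, HasValueAt 0 (cs.signCoeff N w * ρ (ha.T w) (single t 1) ξ)
      (if cs.length w = N then single t 1 ξ else 0) := by
    intro w _
    convert (cs.hasValueAt_signCoeff (hN w)).mul (hρ.hasValueAt_zero_apply_T_of_isSink ht w ξ)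
      using 1
    split_ifs with hw
    · simp [single_apply, hw, ← mul_pow]
    · simp
  convert HasValueAt.sum _ h using 1
  · rw [ha.signSumT_apply_apply]
  · simp [Finset.sum_ite, single_apply]

lemma sumT_apply_single_self_ne_zero (hρ : WDigraphRep cs ha Γ ρ) (α : V) :
    ρ ha.sumT (single α 1) α ≠ 0 := by
  choose q hq hval using fun w => hρ.exists_nonneg_hasValueAt_two w α α
  have hq1 : q 1 = 1 := (hval 1).unique (by simpa [ha.T_one] using hasValueAt_single 2 α α)
  rw [ha.sumT_apply_apply]
  refine (HasValueAt.sum Finset.univ fun w _ => hval w).ne_zero (ne_of_gt ?_)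
  calc (0 : ℚ) < q 1 := by rw [hq1]; exact one_pos
    _ ≤ ∑ w, q w := Finset.single_le_sum (fun w _ => hq w) (Finset.mem_univ 1)

lemma edgeMatrix_mul_sumT_apply (hρ : WDigraphRep cs ha Γ ρ) {γ δ : V} {i : B} {d : Bool}
    (hE : Γ.Edge γ δ i d) (α : V) :
    edgeMatrix uu d 1 0 * ρ ha.sumT (single δ 1) α =
      (uu ^ 2 - edgeMatrix uu d 0 0) * ρ ha.sumT (single γ 1) α := by
  have h := congrArg (fun x => ρ ha.sumT x α) (hρ.actsBy γ δ i d hE).1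
  have hrow :
      ρ ha.sumT (ρ (ha.T (cs.simple i)) (single γ 1)) = uu ^ 2 • ρ ha.sumT (single γ 1) := by
    rw [← Module.End.mul_apply, ← map_mul, ha.sumT_mul_T_simple, map_smul, LinearMap.smul_apply]
  simp only [hrow, map_add, map_smul, Finsupp.add_apply, Finsupp.smul_apply, smul_eq_mul] at h
  linear_combination -h

lemma intDegree_sumT_apply_lt (hρ : WDigraphRep cs ha Γ ρ) {γ δ : V} {i : B} {d : Bool}
    (hE : Γ.Edge γ δ i d) (α : V) (hγ : ρ ha.sumT (single γ 1) α ≠ 0) :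
    ρ ha.sumT (single δ 1) α ≠ 0 ∧
      (ρ ha.sumT (single γ 1) α).intDegree < (ρ ha.sumT (single δ 1) α).intDegree := by
  have h := hρ.edgeMatrix_mul_sumT_apply hE α
  have hne : edgeMatrix uu d 1 0 * ρ ha.sumT (single δ 1) α ≠ 0 := by
    rw [h]; exact mul_ne_zero (uu_sq_sub_edgeMatrix_ne_zero d) hγ
  have hδ := right_ne_zero_of_mul hne
  refine ⟨hδ, ?_⟩
  have hdeg := congrArg RatFunc.intDegree h
  rw [RatFunc.intDegree_mul (edgeMatrix_uu_offDiag_ne_zero d).2 hδ,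
    RatFunc.intDegree_mul (uu_sq_sub_edgeMatrix_ne_zero d) hγ] at hdeg
  have := intDegree_edgeMatrix_lt d
  omega

lemma acyclic (hρ : WDigraphRep cs ha Γ ρ) : Γ.Acyclic := fun α hα =>
  lt_irrefl _ (hα.lt_of_forall_lt (p := fun β => ρ ha.sumT (single β 1) α ≠ 0)
    (fun _ _ ⟨_, _, hE⟩ hγ => hρ.intDegree_sumT_apply_lt hE α hγ)
    (hρ.sumT_apply_single_self_ne_zero α)).2

end WDigraphRep

/-- If `(W,S)` is finite then every `W`-digraph is acyclic;
moreover, for a `W`-digraph with finitely many vertices, the number of sources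
and the number of sinks each equal the number of connected components. -/
theorem wdigraph_acyclic_card_sources_sinks {V : Type*} [Finite W]
    (cs : CoxeterSystem M W) (ha : HeckeAlgebra cs H)
    (Γ : SLabeledDigraph V B) (hwd : IsWDigraph cs ha Γ) :
    Γ.Acyclic ∧
    (Finite V →
      Nat.card {a : V // Γ.IsSource a} = Nat.card (Quotient Γ.compSetoid) ∧
      Nat.card {a : V // Γ.IsSink a} = Nat.card (Quotient Γ.compSetoid)) := by
  obtain ⟨ρ, hρ⟩ := hwd
  have := Fintype.ofFinite W
  refine ⟨hρ.acyclic, fun _ => ⟨?_, ?_⟩⟩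
  · exact Γ.compSetoid.card_subtype_eq_card_quotient hρ.acyclic.exists_isSource
      fun _ _ => hρ.eq_of_reflTransGen ha.T_simple_mul_sumT one_ne_zero
        fun γ _ _ hξ => hρ.hasValueAt_sumT_apply_of_isSource γ hξ
  · obtain ⟨w₀, hw₀⟩ := Finite.exists_max cs.length
    have hm : ((Finset.univ.filter (cs.length · = cs.length w₀)).card : ℚ) ≠ 0 :=
      Nat.cast_ne_zero.mpr (Finset.card_ne_zero_of_mem (a := w₀) (by simp))
    exact Γ.compSetoid.card_subtype_eq_card_quotient hρ.acyclic.exists_isSink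
      fun _ _ => hρ.eq_of_reflTransGen (ha.T_simple_mul_signSumT hw₀) hm
        fun _ _ ht _ => hρ.hasValueAt_signSumT_apply_of_isSink hw₀ ht _
end
end

section
/- Let (W,S) be a Coxeter system, Γ a W-digraph with vertex set X, and let the 0-Hecke algebra H_0 act on the ℚ-vector space M_0 with basis X by: a_s·α = β if Γ has an edge (solid or dashed) from α to β labeled s, and a_s·α = −α if the edge of Γ labeled s at α ends at α. Then for ω ∈ X the following are equivalent: (i) ω is a sink of Γ; (ii) a_s·ω = −ω for all s ∈ S; (iii) a_w·ω = (−1)^{ℓ(w)}ω for all w ∈ W. Moreover, if W is finite with longest element w_0, then (i)–(iii) are further equivalent to: (iv) ω = a_{w_0}·α or ω = −a_{w_0}·α for some α ∈ X. -/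
open Finsupp

set_option synthInstance.maxHeartbeats 1000000
set_option maxHeartbeats 1000000

noncomputable section

variable {B W : Type*} [Group W] {M : CoxeterMatrix B}
variable {H : Type*} [Ring H] [Algebra Kq H]

/-- The `0`-Hecke algebra of `(W,S)` over `ℚ`: a `ℚ`-algebra with basis
`{a_w : w ∈ W}` such that `a_1 = 1`, `a_s a_w = a_{sw}` if `ℓ(sw) > ℓ(w)`,
and `a_s a_w = -a_w` if `ℓ(sw) < ℓ(w)`. -/
structure ZeroHeckeAlgebra {B W : Type*} [Group W] {M : CoxeterMatrix B}
    (cs : CoxeterSystem M W) (H0 : Type*) [Ring H0] [Algebra ℚ H0] where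
  a : W → H0
  basis : Module.Basis W ℚ H0
  basis_eq : ∀ w, basis w = a w
  a_one : a 1 = 1
  a_mul_of_lt : ∀ (i : B) (w : W), cs.length w < cs.length (cs.simple i * w) →
    a (cs.simple i) * a w = a (cs.simple i * w)
  a_mul_of_gt : ∀ (i : B) (w : W), cs.length (cs.simple i * w) < cs.length w →
    a (cs.simple i) * a w = - a w

/-- `ρ0` is the representation of the `0`-Hecke algebra on `M₀` (the
`ℚ`-vector space with basis the vertex set of `Γ`) in which
`a_s · α = β` if `Γ` has an edge (solid or dashed) from `α` to `β` labeled
`s`, and `a_s · α = -α` if the edge of `Γ` labeled `s` at `α` ends at `α`. -/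
def ZeroHeckeRep {V H0 : Type*} [Ring H0] [Algebra ℚ H0]
    (cs : CoxeterSystem M W) (hz : ZeroHeckeAlgebra cs H0)
    (Γ : SLabeledDigraph V B)
    (ρ0 : H0 →ₐ[ℚ] Module.End ℚ (V →₀ ℚ)) : Prop :=
  ∀ (α β : V) (i : B) (d : Bool), Γ.Edge α β i d →
    ρ0 (hz.a (cs.simple i)) (single α (1 : ℚ)) = single β (1 : ℚ) ∧
    ρ0 (hz.a (cs.simple i)) (single β (1 : ℚ)) = - single β (1 : ℚ)

/-! Every edge at a sink `ω` ends at `ω`, so `a_s ω = -ω` for all `s`; an edge leaving `ω`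
would instead give `a_s ω = β ≠ ±ω`. Propagating along a reduced word, `a_w ω = (-1)^ℓ(w) ω`.
Every simple reflection is a left descent of the longest element `w₀`, so
`a_s a_{w₀} = -a_{w₀}`: the image of `a_{w₀}` consists of common `(-1)`-eigenvectors of the
`a_s`. -/

theorem CoxeterSystem.isLeftDescent_of_forall_length_le (cs : CoxeterSystem M W) {w₀ : W}
    (hw₀ : ∀ w : W, cs.length w ≤ cs.length w₀) (i : B) : cs.IsLeftDescent w₀ i := by
  by_contra h
  have := hw₀ (cs.simple i * w₀)
  rw [cs.not_isLeftDescent_iff.mp h] at this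
  omega

namespace ZeroHeckeAlgebra

variable {H0 : Type*} [Ring H0] [Algebra ℚ H0] {cs : CoxeterSystem M W}
  (hz : ZeroHeckeAlgebra cs H0)

theorem a_eq_a_simple_mul_of_isLeftDescent {w : W} {i : B} (hi : cs.IsLeftDescent w i) :
    hz.a w = hz.a (cs.simple i) * hz.a (cs.simple i * w) := by
  have hlt : cs.length (cs.simple i * w) < cs.length (cs.simple i * (cs.simple i * w)) := by
    rwa [cs.simple_mul_simple_cancel_left]
  rw [hz.a_mul_of_lt i _ hlt, cs.simple_mul_simple_cancel_left]

theorem a_simple_mul_a_of_forall_length_le {w₀ : W}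
    (hw₀ : ∀ w : W, cs.length w ≤ cs.length w₀) (i : B) :
    hz.a (cs.simple i) * hz.a w₀ = -hz.a w₀ :=
  hz.a_mul_of_gt i w₀ (cs.isLeftDescent_of_forall_length_le hw₀ i)

variable {E : Type*} [AddCommGroup E] [Module ℚ E] (ρ : H0 →ₐ[ℚ] Module.End ℚ E)

theorem apply_a_eq_neg_one_pow_length_smul {v : E}
    (hv : ∀ i : B, ρ (hz.a (cs.simple i)) v = -v) (w : W) :
    ρ (hz.a w) v = ((-1 : ℚ) ^ cs.length w) • v := by
  induction hn : cs.length w using Nat.strong_induction_on generalizing w with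
  | _ n ih =>
    rcases eq_or_ne w 1 with rfl | hw
    · subst hn
      simp [hz.a_one]
    obtain ⟨i, hi⟩ := cs.exists_leftDescent_of_ne_one hw
    have hlen := cs.isLeftDescent_iff.mp hi
    calc ρ (hz.a w) v = ρ (hz.a (cs.simple i)) (ρ (hz.a (cs.simple i * w)) v) := by
          rw [hz.a_eq_a_simple_mul_of_isLeftDescent hi, map_mul, Module.End.mul_apply]
      _ = ((-1 : ℚ) ^ n) • v := by
          rw [ih _ (by omega) _ rfl, map_smul, hv, ← hn, ← hlen, pow_succ, mul_neg_one,
            neg_smul, smul_neg]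

theorem apply_a_simple_apply_a_of_forall_length_le {w₀ : W}
    (hw₀ : ∀ w : W, cs.length w ≤ cs.length w₀) (i : B) (x : E) :
    ρ (hz.a (cs.simple i)) (ρ (hz.a w₀) x) = -ρ (hz.a w₀) x := by
  rw [← Module.End.mul_apply, ← map_mul, hz.a_simple_mul_a_of_forall_length_le hw₀, map_neg,
    LinearMap.neg_apply]

end ZeroHeckeAlgebra

theorem ZeroHeckeRep.isSink_iff_forall_apply_a_simple_eq_neg {V H0 : Type*} [Ring H0]
    [Algebra ℚ H0]
    {cs : CoxeterSystem M W} {hz : ZeroHeckeAlgebra cs H0} {Γ : SLabeledDigraph V B}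
    {ρ0 : H0 →ₐ[ℚ] Module.End ℚ (V →₀ ℚ)} (hρ0 : ZeroHeckeRep cs hz Γ ρ0) (ω : V) :
    Γ.IsSink ω ↔
      ∀ i : B, ρ0 (hz.a (cs.simple i)) (single ω (1 : ℚ)) = -single ω (1 : ℚ) := by
  constructor
  · intro hω i
    obtain ⟨⟨α, β, d⟩, ⟨hinc, hedge⟩, -⟩ := Γ.unique_edge ω i
    rcases hinc with rfl | rfl
    · exact absurd hedge (hω β i d)
    · exact (hρ0 _ _ i d hedge).2
  · intro hneg β i d hedge
    have hβ : β ≠ ω := fun h => Γ.no_loop ω i d (h ▸ hedge)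
    -- `a_s ω` would be both `β` and `-ω`; compare the coefficients at `β`.
    have := DFunLike.congr_fun ((hρ0 ω β i d hedge).1.symm.trans (hneg i)) β
    simp [hβ] at this

theorem zero_hecke_sinks_general {V H0 : Type*} [Ring H0] [Algebra ℚ H0]
    (cs : CoxeterSystem M W)
    (Γ : SLabeledDigraph V B)
    (hz : ZeroHeckeAlgebra cs H0)
    (ρ0 : H0 →ₐ[ℚ] Module.End ℚ (V →₀ ℚ)) (hρ0 : ZeroHeckeRep cs hz Γ ρ0)
    (ω : V) :
    (Γ.IsSink ω ↔
      ∀ i : B, ρ0 (hz.a (cs.simple i)) (single ω (1 : ℚ)) = - single ω (1 : ℚ)) ∧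
    (Γ.IsSink ω ↔
      ∀ w : W, ρ0 (hz.a w) (single ω (1 : ℚ)) =
        ((-1 : ℚ) ^ cs.length w) • single ω (1 : ℚ)) ∧
    (Finite W → ∀ w₀ : W, (∀ w : W, cs.length w ≤ cs.length w₀) →
      (Γ.IsSink ω ↔ ∃ α : V,
        ρ0 (hz.a w₀) (single α (1 : ℚ)) = single ω (1 : ℚ) ∨
        ρ0 (hz.a w₀) (single α (1 : ℚ)) = - single ω (1 : ℚ))) := by
  have hsink := hρ0.isSink_iff_forall_apply_a_simple_eq_neg ω
  have hpow : Γ.IsSink ω ↔ ∀ w : W, ρ0 (hz.a w) (single ω (1 : ℚ)) =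
      ((-1 : ℚ) ^ cs.length w) • single ω (1 : ℚ) := by
    refine ⟨fun hω => hz.apply_a_eq_neg_one_pow_length_smul ρ0 (hsink.mp hω), fun h => ?_⟩
    exact hsink.mpr fun i => by simpa [cs.length_simple] using h (cs.simple i)
  refine ⟨hsink, hpow, fun _ w₀ hw₀ => ⟨fun hω => ⟨ω, ?_⟩, ?_⟩⟩
  · rw [hpow.mp hω w₀]
    rcases neg_one_pow_eq_or ℚ (cs.length w₀) with h | h <;> simp [h]
  · rintro ⟨α, hα | hα⟩ <;> refine hsink.mpr fun i => ?_
    · rw [← hα]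
      exact hz.apply_a_simple_apply_a_of_forall_length_le ρ0 hw₀ i _
    · rw [neg_eq_iff_eq_neg.mp hα.symm, map_neg,
        hz.apply_a_simple_apply_a_of_forall_length_le ρ0 hw₀ i]

/-- Lemma `h0sinks`.  With the `0`-Hecke algebra acting on
`M₀` as above, for a vertex `ω` the following are equivalent:
(i) `ω` is a sink of `Γ`; (ii) `a_s ω = -ω` for all `s ∈ S`;
(iii) `a_w ω = (-1)^{ℓ(w)} ω` for all `w ∈ W`.  If moreover `W` is finite
with longest element `w₀`, these are equivalent to:
(iv) `ω = ±a_{w₀} α` for some vertex `α`. -/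
theorem zero_hecke_sinks {V H0 : Type*} [Ring H0] [Algebra ℚ H0]
    (cs : CoxeterSystem M W) (ha : HeckeAlgebra cs H)
    (Γ : SLabeledDigraph V B) (hwd : IsWDigraph cs ha Γ)
    (hz : ZeroHeckeAlgebra cs H0)
    (ρ0 : H0 →ₐ[ℚ] Module.End ℚ (V →₀ ℚ)) (hρ0 : ZeroHeckeRep cs hz Γ ρ0)
    (ω : V) :
    (Γ.IsSink ω ↔
      ∀ i : B, ρ0 (hz.a (cs.simple i)) (single ω (1 : ℚ)) = - single ω (1 : ℚ)) ∧
    (Γ.IsSink ω ↔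
      ∀ w : W, ρ0 (hz.a w) (single ω (1 : ℚ)) =
        ((-1 : ℚ) ^ cs.length w) • single ω (1 : ℚ)) ∧
    (Finite W → ∀ w₀ : W, (∀ w : W, cs.length w ≤ cs.length w₀) →
      (Γ.IsSink ω ↔ ∃ α : V,
        ρ0 (hz.a w₀) (single α (1 : ℚ)) = single ω (1 : ℚ) ∨
        ρ0 (hz.a w₀) (single α (1 : ℚ)) = - single ω (1 : ℚ))) :=
  zero_hecke_sinks_general cs Γ hz ρ0 hρ0 ω
end
end
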